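/- Let A, B, X, Y be Hermitian positive semi-definite matrices in C^{n×n} and E = (A+X):(B+Y) − A:B. Then ‖E‖ ≤ μ · ‖X∨Y‖, where μ = (1/2)[ ‖(A+B)^† (A−B)‖² + 1 ] and X∨Y is the common upper bound (X+Y)/2 + (X+Y)^{1/2} W^{1/2} (X+Y)^{1/2} with W = ((X+Y)^†)^{1/2}[(X+Y)/4 − X:Y]((X+Y)^†)^{1/2}. -/

import Mathlib

open scoped Matrix Matrix.Norms.L2Operator ComplexOrder

/-- The positive semidefinite square root of a positive semidefinite matrix
(the definition `Matrix.PosSemidef.sqrt` removed from Mathlib, restored verbatim). -/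
noncomputable def Matrix.PosSemidef.sqrt {n 𝕜 : Type*} [Fintype n] [DecidableEq n] [RCLike 𝕜]
    {A : Matrix n n 𝕜} (hA : A.PosSemidef) : Matrix n n 𝕜 :=
  hA.1.eigenvectorUnitary.1 * Matrix.diagonal ((↑) ∘ (√·) ∘ hA.1.eigenvalues) *
  (star hA.1.eigenvectorUnitary : Matrix n n 𝕜)

theorem Matrix.PosSemidef.posSemidef_sqrt {n : ℕ} {A : Matrix (Fin n) (Fin n) ℂ}
    (hA : A.PosSemidef) : hA.sqrt.PosSemidef := by
  have hd : (Matrix.diagonal (((↑) ∘ (√·) ∘ hA.1.eigenvalues) : Fin n → ℂ)).PosSemidef := by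
    apply Matrix.PosSemidef.diagonal
    intro i
    simpa using Complex.zero_le_real.mpr (Real.sqrt_nonneg (hA.1.eigenvalues i))
  have := hd.mul_mul_conjTranspose_same (hA.1.eigenvectorUnitary.1)
  unfold Matrix.PosSemidef.sqrt
  rwa [← Matrix.star_eq_conjTranspose] at this

theorem Matrix.PosSemidef.sqrt_mul_self {n : ℕ} {A : Matrix (Fin n) (Fin n) ℂ}
    (hA : A.PosSemidef) : hA.sqrt * hA.sqrt = A := by
  have hU : star (hA.1.eigenvectorUnitary : Matrix (Fin n) (Fin n) ℂ) *
      (hA.1.eigenvectorUnitary : Matrix (Fin n) (Fin n) ℂ) = 1 :=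
    Matrix.mem_unitaryGroup_iff'.mp hA.1.eigenvectorUnitary.2
  have hsp := hA.1.spectral_theorem
  rw [Unitary.conjStarAlgAut_apply] at hsp
  unfold Matrix.PosSemidef.sqrt
  conv_rhs => rw [hsp]
  set U : Matrix (Fin n) (Fin n) ℂ := hA.1.eigenvectorUnitary.1
  calc U * Matrix.diagonal (((↑) ∘ (√·) ∘ hA.1.eigenvalues) : Fin n → ℂ) * star U *
        (U * Matrix.diagonal (((↑) ∘ (√·) ∘ hA.1.eigenvalues) : Fin n → ℂ) * star U)
      = U * (Matrix.diagonal (((↑) ∘ (√·) ∘ hA.1.eigenvalues) : Fin n → ℂ) * (star U * U) *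
          Matrix.diagonal (((↑) ∘ (√·) ∘ hA.1.eigenvalues) : Fin n → ℂ)) * star U := by
        noncomm_ring
    _ = U * Matrix.diagonal (RCLike.ofReal ∘ hA.1.eigenvalues) * star U := by
        rw [hU, Matrix.mul_one, Matrix.diagonal_mul_diagonal]
        congr 3
        funext i
        simp only [Function.comp_apply]
        rw [← Complex.ofReal_mul, Real.mul_self_sqrt (hA.eigenvalues_nonneg i)]
        rfl

theorem Matrix.PosSemidef.eq_of_sq_eq_sq {n : ℕ} {A B : Matrix (Fin n) (Fin n) ℂ}
    (hA : A.PosSemidef) (hB : B.PosSemidef) (hAB : A ^ 2 = B ^ 2) : A = B := by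
  open MatrixOrder in
  calc A = CFC.sqrt (A * A) := (CFC.sqrt_mul_self A hA.nonneg).symm
    _ = CFC.sqrt (B * B) := by rw [← sq, hAB, sq]
    _ = B := CFC.sqrt_mul_self B hB.nonneg

theorem Matrix.PosSemidef.eq_sqrt_of_sq_eq {n : ℕ} {A : Matrix (Fin n) (Fin n) ℂ}
    (hA : A.PosSemidef) {B : Matrix (Fin n) (Fin n) ℂ} (hB : B.PosSemidef) (hAB : A ^ 2 = B) :
    A = hB.sqrt := by
  apply Matrix.PosSemidef.eq_of_sq_eq_sq hA hB.posSemidef_sqrt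
  rw [hAB, sq, hB.sqrt_mul_self]

/-- `MPInv A B` means `B` is the Moore-Penrose inverse of `A`. -/
def MPInv {n : ℕ} (A B : Matrix (Fin n) (Fin n) ℂ) : Prop :=
  A * B * A = A ∧ B * A * B = B ∧ (A * B).IsHermitian ∧ (B * A).IsHermitian

namespace Perturb

variable {n : ℕ}

theorem mpinv_unique {A B C : Matrix (Fin n) (Fin n) ℂ} (hB : MPInv A B) (hC : MPInv A C) :
    B = C := by
  obtain ⟨hB1, hB2, hB3, hB4⟩ := hB
  obtain ⟨hC1, hC2, hC3, hC4⟩ := hC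
  have hAB : A * B = A * C := by
    calc A * B = (A * C * A) * B := by rw [hC1]
    _ = (A * C)ᴴ * (A * B)ᴴ := by rw [hC3.eq, hB3.eq]; noncomm_ring
    _ = (A * B * A * C)ᴴ := by simp [Matrix.conjTranspose_mul]; noncomm_ring
    _ = (A * C)ᴴ := by rw [hB1]
    _ = A * C := hC3.eq
  have hBA : B * A = C * A := by
    calc B * A = B * (A * C * A) := by rw [hC1]
    _ = (B * A)ᴴ * (C * A)ᴴ := by rw [hB4.eq, hC4.eq]; noncomm_ring
    _ = (C * A * B * A)ᴴ := by simp [Matrix.conjTranspose_mul]; noncomm_ring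
    _ = (C * (A * B * A))ᴴ := by noncomm_ring
    _ = (C * A)ᴴ := by rw [hB1]
    _ = C * A := hC4.eq
  calc B = B * A * B := hB2.symm
  _ = B * (A * C) := by rw [← hAB]; noncomm_ring
  _ = (B * A) * C := by noncomm_ring
  _ = C * A * C := by rw [hBA]
  _ = C := hC2

theorem mpinv_conjTranspose {A B : Matrix (Fin n) (Fin n) ℂ} (h : MPInv A B) :
    MPInv Aᴴ Bᴴ := by
  obtain ⟨h1, h2, h3, h4⟩ := h
  refine ⟨?_, ?_, ?_, ?_⟩
  · calc Aᴴ * Bᴴ * Aᴴ = (A * B * A)ᴴ := by simp [Matrix.conjTranspose_mul, mul_assoc]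
    _ = Aᴴ := by rw [h1]
  · calc Bᴴ * Aᴴ * Bᴴ = (B * A * B)ᴴ := by simp [Matrix.conjTranspose_mul, mul_assoc]
    _ = Bᴴ := by rw [h2]
  · have : Aᴴ * Bᴴ = (B * A)ᴴ := by simp [Matrix.conjTranspose_mul]
    rw [this]
    exact h4.conjTranspose
  · have : Bᴴ * Aᴴ = (A * B)ᴴ := by simp [Matrix.conjTranspose_mul]
    rw [this]
    exact h3.conjTranspose

theorem mpinv_isHermitian {A B : Matrix (Fin n) (Fin n) ℂ} (hA : A.IsHermitian)
    (h : MPInv A B) : B.IsHermitian := by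
  have h' : MPInv A Bᴴ := by
    have := mpinv_conjTranspose h
    rwa [hA.eq] at this
  exact (mpinv_unique h' h)

end Perturb

namespace Perturb

variable {n : ℕ}

theorem eq_zero_of_posSemidef_of_neg {M : Matrix (Fin n) (Fin n) ℂ}
    (h1 : M.PosSemidef) (h2 : (-M).PosSemidef) : M = 0 := by
  have hq : ∀ x : Fin n → ℂ, M *ᵥ x = 0 := by
    intro x
    rw [← h1.dotProduct_mulVec_zero_iff]
    have a1 := h1.dotProduct_mulVec_nonneg x
    have a2 := h2.dotProduct_mulVec_nonneg x
    rw [Matrix.neg_mulVec, dotProduct_neg, neg_nonneg] at a2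
    exact le_antisymm a2 a1
  ext i j
  have := congrFun (hq (Pi.single j 1)) i
  simpa [Matrix.mulVec_single_one] using this

/-- range lemma: if `0 ≤ P ≤ Q` then `Q * Qd * P = P` for `Qd` the MP inverse of `Q`. -/
theorem range_absorb {P Q Qd : Matrix (Fin n) (Fin n) ℂ}
    (hP : P.PosSemidef) (hPQ : (Q - P).PosSemidef) (h : MPInv Q Qd) :
    Q * Qd * P = P := by
  obtain ⟨h1, h2, h3, h4⟩ := h
  set C : Matrix (Fin n) (Fin n) ℂ := 1 - Q * Qd with hC
  have hCH : Cᴴ = C := by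
    simp [hC, Matrix.conjTranspose_sub, h3.eq]
  have hCQ : C * Q = 0 := by
    simp [hC, Matrix.sub_mul, h1]
  have hQ0 : C * Q * Cᴴ = 0 := by rw [hCQ, Matrix.zero_mul]
  have hsum : C * P * Cᴴ + C * (Q - P) * Cᴴ = 0 := by
    rw [← Matrix.add_mul, ← Matrix.mul_add, add_sub_cancel, hQ0]
  have hP' : (C * P * Cᴴ).PosSemidef := hP.mul_mul_conjTranspose_same C
  have hQP' : (C * (Q - P) * Cᴴ).PosSemidef := hPQ.mul_mul_conjTranspose_same C
  have hPC0 : C * P * Cᴴ = 0 := by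
    apply eq_zero_of_posSemidef_of_neg hP'
    have : -(C * P * Cᴴ) = C * (Q - P) * Cᴴ := by
      linear_combination (norm := noncomm_ring) -hsum
    rw [this]; exact hQP'
  -- deduce C * P = 0
  have hCH2 : C * hP.sqrt * (C * hP.sqrt)ᴴ = 0 := by
    have : C * hP.sqrt * (C * hP.sqrt)ᴴ = C * (hP.sqrt * hP.sqrt) * Cᴴ := by
      rw [Matrix.conjTranspose_mul, hP.posSemidef_sqrt.1.eq]
      noncomm_ring
    rw [this, hP.sqrt_mul_self, hPC0]
  have hCsq : C * hP.sqrt = 0 := Matrix.self_mul_conjTranspose_eq_zero.mp hCH2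
  have hCP : C * P = 0 := by
    rw [← hP.sqrt_mul_self, ← Matrix.mul_assoc, hCsq, Matrix.zero_mul]
  have : (1 - Q * Qd) * P = 0 := hCP
  rw [Matrix.sub_mul, Matrix.one_mul, sub_eq_zero] at this
  exact this.symm

end Perturb

namespace Perturb
variable {n : ℕ}

/-- packaged facts about a PSD pair and MP inverse of the sum -/
structure SumFacts (A B Sd : Matrix (Fin n) (Fin n) ℂ) : Prop where
  hSdH : Sdᴴ = Sd
  absorbA : (A + B) * Sd * A = A
  absorbB : (A + B) * Sd * B = B
  absorbA' : A * Sd * (A + B) = A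
  prodAB : A * Sd * B = A - A * Sd * A

theorem sumFacts {A B Sd : Matrix (Fin n) (Fin n) ℂ}
    (hA : A.PosSemidef) (hB : B.PosSemidef) (h : MPInv (A + B) Sd) :
    SumFacts A B Sd := by
  have hS : (A + B).IsHermitian := hA.1.add hB.1
  have hSd : Sd.IsHermitian := mpinv_isHermitian hS h
  have habsA : (A + B) * Sd * A = A := by
    apply range_absorb hA _ h
    simpa using hB
  have habsB : (A + B) * Sd * B = B := by
    apply range_absorb hB _ h
    simpa using hA
  have habsA' : A * Sd * (A + B) = A := by
    have := congrArg Matrix.conjTranspose habsA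
    simpa [Matrix.conjTranspose_mul, hA.1.eq, hS.eq, hSd.eq, Matrix.mul_assoc] using this
  refine ⟨hSd.eq, habsA, habsB, habsA', ?_⟩
  have : A * Sd * B = A * Sd * (A + B) - A * Sd * A := by noncomm_ring
  rw [this, habsA']

/-- bilinear form helper -/
theorem bil (M N : Matrix (Fin n) (Fin n) ℂ) (v w : Fin n → ℂ) :
    star (M *ᵥ v) ⬝ᵥ (N *ᵥ w) = star v ⬝ᵥ ((Mᴴ * N) *ᵥ w) := by
  rw [Matrix.star_mulVec, ← Matrix.dotProduct_mulVec, Matrix.mulVec_mulVec]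

/-- The key quadratic-form identity for parallel sums. -/
theorem qf_identity {A B Sd : Matrix (Fin n) (Fin n) ℂ}
    (hA : Aᴴ = A) (hB : Bᴴ = B) (hSd : Sdᴴ = Sd)
    (hr : (A + B) * Sd * A = A)
    (v y : Fin n → ℂ) :
    star (v - y) ⬝ᵥ (A *ᵥ (v - y)) + star y ⬝ᵥ (B *ᵥ y)
      = star (y - (Sd * A) *ᵥ v) ⬝ᵥ ((A + B) *ᵥ (y - (Sd * A) *ᵥ v))
        + star v ⬝ᵥ ((A - A * Sd * A) *ᵥ v) := by
  have hr' : A * Sd * (A + B) = A := by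
    have h := congrArg Matrix.conjTranspose hr
    simp only [Matrix.conjTranspose_mul, Matrix.conjTranspose_add, hA, hB, hSd] at h
    rw [Matrix.mul_assoc]; exact h
  have f1 : (A + B) *ᵥ ((Sd * A) *ᵥ v) = A *ᵥ v := by
    rw [Matrix.mulVec_mulVec, ← Matrix.mul_assoc, hr]
  have f2 : star ((Sd * A) *ᵥ v) ⬝ᵥ ((A + B) *ᵥ y) = star v ⬝ᵥ (A *ᵥ y) := by
    rw [bil]
    congr 2
    rw [Matrix.conjTranspose_mul, hA, hSd, hr']
  have g2 := f2
  rw [Matrix.add_mulVec, dotProduct_add] at g2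
  have g4 : star ((Sd * A) *ᵥ v) ⬝ᵥ (A *ᵥ v) = star v ⬝ᵥ ((A * Sd * A) *ᵥ v) := by
    rw [bil, Matrix.conjTranspose_mul, hA, hSd]
  simp only [Matrix.mulVec_sub, Matrix.sub_mulVec, Matrix.add_mulVec, star_sub,
    sub_dotProduct, dotProduct_sub, dotProduct_add, f1, g4]
  linear_combination g2

end Perturb

namespace Perturb
variable {n : ℕ}

/-- conjugate a real diagonal by a matrix -/
noncomputable def UD (U : Matrix (Fin n) (Fin n) ℂ) (f : Fin n → ℝ) : Matrix (Fin n) (Fin n) ℂ :=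
  U * Matrix.diagonal (fun i => (f i : ℂ)) * star U

theorem UD_mul {U : Matrix (Fin n) (Fin n) ℂ} (hU : U ∈ Matrix.unitaryGroup (Fin n) ℂ)
    (f g : Fin n → ℝ) : UD U f * UD U g = UD U (f * g) := by
  have h1 : star U * U = 1 := (Matrix.mem_unitaryGroup_iff'.mp hU)
  unfold UD
  calc U * Matrix.diagonal (fun i => (f i : ℂ)) * star U *
        (U * Matrix.diagonal (fun i => (g i : ℂ)) * star U)
      = U * (Matrix.diagonal (fun i => (f i : ℂ)) * (star U * U) *
          Matrix.diagonal (fun i => (g i : ℂ))) * star U := by noncomm_ring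
    _ = U * (Matrix.diagonal (fun i => (f i : ℂ)) * Matrix.diagonal (fun i => (g i : ℂ))) *
          star U := by rw [h1]; noncomm_ring
    _ = U * Matrix.diagonal (fun i => ((f * g) i : ℂ)) * star U := by
          rw [Matrix.diagonal_mul_diagonal]
          norm_num

theorem UD_posSemidef {U : Matrix (Fin n) (Fin n) ℂ} {f : Fin n → ℝ}
    (hf : ∀ i, 0 ≤ f i) : (UD U f).PosSemidef := by
  have hd : (Matrix.diagonal (fun i => (f i : ℂ))).PosSemidef := by
    apply Matrix.PosSemidef.diagonal
    intro i
    simpa using Complex.zero_le_real.mpr (hf i)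
  have := hd.mul_mul_conjTranspose_same U
  unfold UD
  rwa [Matrix.star_eq_conjTranspose]

theorem UD_isHermitian (U : Matrix (Fin n) (Fin n) ℂ) (f : Fin n → ℝ) :
    (UD U f).IsHermitian := by
  have hd : (Matrix.diagonal (fun i => (f i : ℂ))).IsHermitian := by
    apply Matrix.isHermitian_diagonal_iff.mpr
    intro i
    simp [IsSelfAdjoint, Complex.conj_ofReal]
  unfold UD Matrix.IsHermitian
  simp only [Matrix.conjTranspose_mul, Matrix.star_eq_conjTranspose,
    Matrix.conjTranspose_conjTranspose, hd.eq, Matrix.mul_assoc]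

theorem UD_sub (U : Matrix (Fin n) (Fin n) ℂ) (f g : Fin n → ℝ) :
    UD U f - UD U g = UD U (f - g) := by
  unfold UD
  rw [← Matrix.sub_mul, ← Matrix.mul_sub]
  congr 2
  rw [Matrix.diagonal_sub]
  congr 1
  funext i
  simp

theorem UD_add (U : Matrix (Fin n) (Fin n) ℂ) (f g : Fin n → ℝ) :
    UD U f + UD U g = UD U (f + g) := by
  unfold UD
  rw [← Matrix.add_mul, ← Matrix.mul_add]
  congr 2
  rw [Matrix.diagonal_add]
  congr 1
  funext i
  simp

end Perturb

namespace Perturb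
variable {n : ℕ}

theorem UD_congr {U : Matrix (Fin n) (Fin n) ℂ} {f g : Fin n → ℝ} (h : ∀ i, f i = g i) :
    UD U f = UD U g := by
  unfold UD
  have : (fun i => ((f i : ℂ))) = fun i => ((g i : ℂ)) := by funext i; rw [h i]
  rw [this]

theorem spectral_UD {M : Matrix (Fin n) (Fin n) ℂ} (hM : M.IsHermitian) :
    M = UD (hM.eigenvectorUnitary : Matrix (Fin n) (Fin n) ℂ) hM.eigenvalues := by
  have := hM.spectral_theorem
  rw [Unitary.conjStarAlgAut_apply] at this
  unfold UD
  exact this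

/-- absolute value of a Hermitian matrix -/
theorem exists_abs {M : Matrix (Fin n) (Fin n) ℂ} (hM : M.IsHermitian) :
    ∃ N : Matrix (Fin n) (Fin n) ℂ, N.PosSemidef ∧ N * N = M * M ∧ (N - M).PosSemidef ∧
      (N + M).PosSemidef := by
  set U : Matrix (Fin n) (Fin n) ℂ := (hM.eigenvectorUnitary : Matrix (Fin n) (Fin n) ℂ)
  have hU : U ∈ Matrix.unitaryGroup (Fin n) ℂ := hM.eigenvectorUnitary.2
  set d : Fin n → ℝ := hM.eigenvalues
  have hMud : M = UD U d := spectral_UD hM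
  refine ⟨UD U (fun i => |d i|), UD_posSemidef (fun i => abs_nonneg _), ?_, ?_, ?_⟩
  · rw [UD_mul hU, hMud, UD_mul hU]
    apply UD_congr
    intro i
    simp [abs_mul_abs_self]
  · rw [hMud, UD_sub]
    exact UD_posSemidef (fun i => by simp [sub_nonneg, le_abs_self])
  · rw [hMud, UD_add]
    exact UD_posSemidef (fun i => by
      have := neg_abs_le (d i); simp only [Pi.add_apply]; linarith)

/-- identification of the square root of the pseudoinverse -/
theorem sqrt_mul_pinv_sqrt {T XYd XYdh : Matrix (Fin n) (Fin n) ℂ}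
    (hT : T.PosSemidef) (hd : MPInv T XYd) (hh : XYdh.PosSemidef)
    (hh2 : XYdh * XYdh = XYd) :
    hT.sqrt * XYdh = T * XYd ∧ XYdh * hT.sqrt = T * XYd := by
  set U : Matrix (Fin n) (Fin n) ℂ := (hT.1.eigenvectorUnitary : Matrix (Fin n) (Fin n) ℂ)
  have hU : U ∈ Matrix.unitaryGroup (Fin n) ℂ := hT.1.eigenvectorUnitary.2
  set d : Fin n → ℝ := hT.1.eigenvalues with hd_def
  have hdnn : ∀ i, 0 ≤ d i := fun i => hT.eigenvalues_nonneg i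
  have hTud : T = UD U d := spectral_UD hT.1
  set p : Fin n → ℝ := fun i => if d i = 0 then 0 else (d i)⁻¹ with hp_def
  have hpnn : ∀ i, 0 ≤ p i := by
    intro i
    by_cases h : d i = 0
    · simp [hp_def, h]
    · simp only [hp_def, if_neg h]
      exact inv_nonneg.mpr (hdnn i)
  have hXYd : XYd = UD U p := by
    apply mpinv_unique hd
    refine ⟨?_, ?_, ?_, ?_⟩
    · rw [hTud, UD_mul hU, UD_mul hU]
      apply UD_congr
      intro i
      by_cases h : d i = 0
      · simp [hp_def, h]
      · simp only [hp_def, Pi.mul_apply, if_neg h]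
        field_simp
    · rw [hTud, UD_mul hU, UD_mul hU]
      apply UD_congr
      intro i
      by_cases h : d i = 0
      · simp [hp_def, h]
      · simp only [hp_def, Pi.mul_apply, if_neg h]
        field_simp
    · rw [hTud, UD_mul hU]; exact UD_isHermitian U _
    · rw [hTud, UD_mul hU]; exact UD_isHermitian U _
  have hps : ∀ i, 0 ≤ Real.sqrt (p i) := fun i => Real.sqrt_nonneg _
  have hXYdh : XYdh = UD U (fun i => Real.sqrt (p i)) := by
    apply Matrix.PosSemidef.eq_of_sq_eq_sq hh (UD_posSemidef hps)
    rw [pow_two, pow_two, hh2, UD_mul hU, hXYd]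
    apply UD_congr
    intro i
    simp [Real.mul_self_sqrt (hpnn i)]
  have hsq : hT.sqrt = UD U (fun i => Real.sqrt (d i)) := by
    symm
    apply Matrix.PosSemidef.eq_sqrt_of_sq_eq (UD_posSemidef (fun i => Real.sqrt_nonneg _)) hT
    rw [pow_two, UD_mul hU]
    rw [hTud]
    apply UD_congr
    intro i
    simp [Real.mul_self_sqrt (hdnn i)]
  have key : ∀ q r : Fin n → ℝ, (∀ i, q i * r i = d i * p i) →
      UD U q * UD U r = T * XYd := by
    intro q r hqr
    rw [UD_mul hU, hTud, hXYd, UD_mul hU]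
    exact UD_congr hqr
  constructor
  · rw [hsq, hXYdh]
    apply key
    intro i
    by_cases h : d i = 0
    · simp [hp_def, h]
    · have hpos : 0 < d i := lt_of_le_of_ne (hdnn i) (Ne.symm h)
      simp only [hp_def, if_neg h]
      rw [Real.sqrt_inv, mul_inv_cancel₀ (by positivity), mul_inv_cancel₀ h]
  · rw [hsq, hXYdh]
    apply key
    intro i
    by_cases h : d i = 0
    · simp [hp_def, h]
    · have hpos : 0 < d i := lt_of_le_of_ne (hdnn i) (Ne.symm h)
      simp only [hp_def, if_neg h]
      rw [Real.sqrt_inv, inv_mul_cancel₀ (by positivity), mul_inv_cancel₀ h]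

end Perturb

namespace Perturb
variable {n : ℕ}

/-- view a vector as an element of Euclidean space -/
noncomputable def ev (v : Fin n → ℂ) : EuclideanSpace ℂ (Fin n) := (WithLp.equiv 2 _).symm v

theorem ev_normsq (v : Fin n → ℂ) : (star v ⬝ᵥ v).re = ‖ev v‖ ^ 2 := by
  have h1 : (inner ℂ (ev v) (ev v) : ℂ) = star v ⬝ᵥ v :=
    (EuclideanSpace.inner_toLp_toLp v v).trans (dotProduct_comm _ _)
  have h2 : (inner ℂ (ev v) (ev v) : ℂ) = ((‖ev v‖ : ℂ)) ^ 2 := inner_self_eq_norm_sq_to_K (ev v)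
  rw [← h1, h2]
  simp [← Complex.ofReal_pow]

theorem qf_re_le_norm (Z : Matrix (Fin n) (Fin n) ℂ) (v : Fin n → ℂ) :
    (star v ⬝ᵥ (Z *ᵥ v)).re ≤ ‖Z‖ * ‖ev v‖ ^ 2 := by
  have h1 : (star v ⬝ᵥ (Z *ᵥ v)) = (inner ℂ (ev v) (ev (Z *ᵥ v)) : ℂ) :=
    ((EuclideanSpace.inner_toLp_toLp v (Z *ᵥ v)).trans (dotProduct_comm _ _)).symm
  have h2 : ‖(inner ℂ (ev v) (ev (Z *ᵥ v)) : ℂ)‖ ≤ ‖ev v‖ * ‖ev (Z *ᵥ v)‖ :=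
    norm_inner_le_norm _ _
  have h3 : ‖ev (Z *ᵥ v)‖ ≤ ‖Z‖ * ‖ev v‖ := Z.l2_opNorm_mulVec (ev v)
  calc (star v ⬝ᵥ (Z *ᵥ v)).re ≤ ‖(star v ⬝ᵥ (Z *ᵥ v))‖ := Complex.re_le_norm _
  _ = ‖(inner ℂ (ev v) (ev (Z *ᵥ v)) : ℂ)‖ := by rw [h1]
  _ ≤ ‖ev v‖ * ‖ev (Z *ᵥ v)‖ := h2
  _ ≤ ‖ev v‖ * (‖Z‖ * ‖ev v‖) := by
      exact mul_le_mul_of_nonneg_left h3 (norm_nonneg _)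
  _ = ‖Z‖ * ‖ev v‖ ^ 2 := by ring

theorem norm_le_of_qf {E : Matrix (Fin n) (Fin n) ℂ} (hE : E.PosSemidef) {r : ℝ} (hr : 0 ≤ r)
    (h : ∀ v : Fin n → ℂ, (star v ⬝ᵥ (E *ᵥ v)).re ≤ r * ‖ev v‖ ^ 2) : ‖E‖ ≤ r := by
  rw [Matrix.l2_opNorm_def]
  apply ContinuousLinearMap.opNorm_le_bound _ hr
  intro x
  set v : Fin n → ℂ := WithLp.equiv 2 _ x with hv
  have hx : x = ev v := rfl
  have happ : (Matrix.toEuclideanLin.trans LinearMap.toContinuousLinearMap E) x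
      = ev (E *ᵥ v) := rfl
  rw [happ, hx]
  set H := hE.sqrt with hH
  have hHH : H * H = E := hE.sqrt_mul_self
  have hHherm : Hᴴ = H := hE.posSemidef_sqrt.1.eq
  have key : ‖ev (E *ᵥ v)‖ ^ 2 ≤ (r * ‖ev v‖) ^ 2 := by
    have e1 : (star (E *ᵥ v) ⬝ᵥ (E *ᵥ v)) = star (H *ᵥ v) ⬝ᵥ (E *ᵥ (H *ᵥ v)) := by
      rw [bil, bil, hE.1.eq, hHherm]
      rw [Matrix.mulVec_mulVec]
      congr 1
      rw [← hHH]; noncomm_ring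
    have e2 : (star (H *ᵥ v) ⬝ᵥ (H *ᵥ v)) = star v ⬝ᵥ (E *ᵥ v) := by
      rw [bil, hHherm, hHH]
    have p1 : ‖ev (E *ᵥ v)‖ ^ 2 = (star (H *ᵥ v) ⬝ᵥ (E *ᵥ (H *ᵥ v))).re := by
      rw [← ev_normsq, e1]
    have p2 : ‖ev (H *ᵥ v)‖ ^ 2 = (star v ⬝ᵥ (E *ᵥ v)).re := by
      rw [← ev_normsq, e2]
    have q1 : (star (H *ᵥ v) ⬝ᵥ (E *ᵥ (H *ᵥ v))).re ≤ r * ‖ev (H *ᵥ v)‖ ^ 2 := h _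
    have q2 : (star v ⬝ᵥ (E *ᵥ v)).re ≤ r * ‖ev v‖ ^ 2 := h _
    calc ‖ev (E *ᵥ v)‖ ^ 2 ≤ r * ‖ev (H *ᵥ v)‖ ^ 2 := by rw [p1]; exact q1
    _ = r * (star v ⬝ᵥ (E *ᵥ v)).re := by rw [p2]
    _ ≤ r * (r * ‖ev v‖ ^ 2) := mul_le_mul_of_nonneg_left q2 hr
    _ = (r * ‖ev v‖) ^ 2 := by ring
  have h1 : 0 ≤ r * ‖ev v‖ := by positivity
  have h2 := Real.sqrt_le_sqrt key
  rwa [Real.sqrt_sq (norm_nonneg _), Real.sqrt_sq h1] at h2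

end Perturb

namespace Perturb
variable {n : ℕ}

set_option maxHeartbeats 1000000 in
theorem vee_upper {X Y XYd XYdh Wh : Matrix (Fin n) (Fin n) ℂ}
    (hX : X.PosSemidef) (hY : Y.PosSemidef) (hXYd : MPInv (X + Y) XYd)
    (hXYdh : XYdh.PosSemidef) (hXYdh2 : XYdh * XYdh = XYd) (hWh : Wh.PosSemidef)
    (hWh2 : Wh * Wh = XYdh * ((4 : ℂ)⁻¹ • (X + Y) - X * XYd * Y) * XYdh) :
    ((2 : ℂ)⁻¹ • (X + Y) + (hX.add hY).sqrt * Wh * (hX.add hY).sqrt - X).PosSemidef ∧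
    ((2 : ℂ)⁻¹ • (X + Y) + (hX.add hY).sqrt * Wh * (hX.add hY).sqrt - Y).PosSemidef := by
  have hT : (X + Y).PosSemidef := hX.add hY
  have hXYdH : XYd.IsHermitian := mpinv_isHermitian hT.1 hXYd
  have SF := sumFacts hX hY hXYd
  have hYX : MPInv (Y + X) XYd := by rwa [add_comm Y X]
  have SF' := sumFacts hY hX hYX
  -- basic product identities
  have f1 : X * XYd * Y = X - X * XYd * X := SF.prodAB
  have f3 : Y * XYd * Y = Y - Y * XYd * X := by
    linear_combination (norm := noncomm_ring) SF'.prodAB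
  have f2 : Y * XYd * X = X - X * XYd * X := by
    have h := congrArg Matrix.conjTranspose f1
    simpa [Matrix.conjTranspose_mul, Matrix.conjTranspose_sub, hX.1.eq, hY.1.eq, hXYdH.eq,
      Matrix.mul_assoc] using h
  -- the inner identity
  have inner_id : (4 : ℂ)⁻¹ • (X + Y) - X * XYd * Y
      = (4 : ℂ)⁻¹ • ((X - Y) * XYd * (X - Y)) := by
    have expand : (X - Y) * XYd * (X - Y)
        = X * XYd * X - X * XYd * Y - Y * XYd * X + Y * XYd * Y := by noncomm_ring
    rw [expand, f1, f2, f3, f2]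
    module
  have hMH : ((2 : ℂ)⁻¹ • (XYdh * (X - Y) * XYdh)).IsHermitian := by
    unfold Matrix.IsHermitian
    rw [Matrix.conjTranspose_smul]
    rw [Matrix.conjTranspose_mul, Matrix.conjTranspose_mul, Matrix.conjTranspose_sub,
      hX.1.eq, hY.1.eq, hXYdh.1.eq]
    simp [Matrix.mul_assoc]
  have hMM : Wh * Wh = ((2 : ℂ)⁻¹ • (XYdh * (X - Y) * XYdh))
      * ((2 : ℂ)⁻¹ • (XYdh * (X - Y) * XYdh)) := by
    have half : (2 : ℂ)⁻¹ • (XYdh * (X - Y) * XYdh) * ((2 : ℂ)⁻¹ • (XYdh * (X - Y) * XYdh))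
        = (4 : ℂ)⁻¹ • (XYdh * (X - Y) * XYdh * (XYdh * (X - Y) * XYdh)) := by
      rw [smul_mul_assoc, mul_smul_comm, smul_smul]
      norm_num
    rw [hWh2, inner_id, half, mul_smul_comm, smul_mul_assoc]
    congr 1
    rw [← hXYdh2]
    noncomm_ring
  -- Wh is |M|
  obtain ⟨N, hN, hNN, hNMm, hNMp⟩ := exists_abs hMH
  have hWhN : Wh = N := by
    apply Matrix.PosSemidef.eq_of_sq_eq_sq hWh hN
    rw [pow_two, pow_two, hMM, hNN]
  -- projection facts
  obtain ⟨hThR, hRTh⟩ := sqrt_mul_pinv_sqrt hT hXYd hXYdh hXYdh2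
  have hPX : (X + Y) * XYd * X = X :=
    range_absorb hX (by simpa using hY) hXYd
  have hPY : (X + Y) * XYd * Y = Y :=
    range_absorb hY (by simpa [add_sub_assoc] using hX) hXYd
  have hXYdT : XYd * (X + Y) = (X + Y) * XYd := by
    have h2 : (XYd * (X + Y)).IsHermitian := hXYd.2.2.2
    calc XYd * (X + Y) = (XYd * (X + Y))ᴴ := h2.symm
    _ = (X + Y)ᴴ * XYdᴴ := Matrix.conjTranspose_mul _ _
    _ = (X + Y) * XYd := by rw [hT.1.eq, hXYdH.eq]
  have hXP : X * ((X + Y) * XYd) = X := by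
    have h := congrArg Matrix.conjTranspose hPX
    simp only [Matrix.conjTranspose_mul, hX.1.eq, hT.1.eq, hXYdH.eq] at h
    rw [hXYdT] at h
    linear_combination (norm := noncomm_ring) h
  have hYP : Y * ((X + Y) * XYd) = Y := by
    have h := congrArg Matrix.conjTranspose hPY
    simp only [Matrix.conjTranspose_mul, hY.1.eq, hT.1.eq, hXYdH.eq] at h
    rw [hXYdT] at h
    linear_combination (norm := noncomm_ring) h
  -- Th M Th = (1/2) Δ
  have hThMTh : hT.sqrt * ((2 : ℂ)⁻¹ • (XYdh * (X - Y) * XYdh)) * hT.sqrt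
      = (2 : ℂ)⁻¹ • (X - Y) := by
    rw [Matrix.mul_smul, Matrix.smul_mul]
    congr 1
    calc hT.sqrt * (XYdh * (X - Y) * XYdh) * hT.sqrt
        = (hT.sqrt * XYdh) * (X - Y) * (XYdh * hT.sqrt) := by noncomm_ring
    _ = ((X + Y) * XYd) * (X - Y) * ((X + Y) * XYd) := by rw [hThR, hRTh]
    _ = X - Y := by
        rw [Matrix.mul_sub, hPX, hPY, Matrix.sub_mul, hXP, hYP]
  have hThH : hT.sqrtᴴ = hT.sqrt := hT.posSemidef_sqrt.1.eq
  constructor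
  · have key : (2 : ℂ)⁻¹ • (X + Y) + hT.sqrt * Wh * hT.sqrt - X
        = hT.sqrt * (N - (2 : ℂ)⁻¹ • (XYdh * (X - Y) * XYdh)) * hT.sqrt := by
      rw [Matrix.mul_sub, Matrix.sub_mul, hThMTh, hWhN]
      module
    rw [show (hX.add hY).sqrt = hT.sqrt from rfl, key]
    have := hNMm.conjTranspose_mul_mul_same hT.sqrt
    rwa [hThH] at this
  · have key : (2 : ℂ)⁻¹ • (X + Y) + hT.sqrt * Wh * hT.sqrt - Y
        = hT.sqrt * (N + (2 : ℂ)⁻¹ • (XYdh * (X - Y) * XYdh)) * hT.sqrt := by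
      rw [Matrix.mul_add, Matrix.add_mul, hThMTh, hWhN]
      module
    rw [show (hX.add hY).sqrt = hT.sqrt from rfl, key]
    have := hNMp.conjTranspose_mul_mul_same hT.sqrt
    rwa [hThH] at this

end Perturb

open Perturb in
set_option maxHeartbeats 1000000 in
/-- Norm bound ‖E‖ ≤ μ ‖X∨Y‖ for the general two-sided perturbation. -/
theorem general_perturbation_norm_le {n : ℕ}
    (A B X Y Sd ABd XYd XYdh Wh : Matrix (Fin n) (Fin n) ℂ)
    (hA : A.PosSemidef) (hB : B.PosSemidef) (hX : X.PosSemidef) (hY : Y.PosSemidef)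
    (hSd : MPInv (A + X + (B + Y)) Sd)
    (hABd : MPInv (A + B) ABd) (hXYd : MPInv (X + Y) XYd)
    (hXYdh : XYdh.PosSemidef) (hXYdh2 : XYdh * XYdh = XYd)
    (hWh : Wh.PosSemidef)
    (hWh2 : Wh * Wh = XYdh * ((4 : ℂ)⁻¹ • (X + Y) - X * XYd * Y) * XYdh) :
    ‖(A + X) * Sd * (B + Y) - A * ABd * B‖
      ≤ (1 / 2) * (‖ABd * (A - B)‖ ^ 2 + 1)
        * ‖(2 : ℂ)⁻¹ • (X + Y) + (hX.add hY).sqrt * Wh * (hX.add hY).sqrt‖ := by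
  obtain ⟨hZX, hZY⟩ := vee_upper hX hY hXYd hXYdh hXYdh2 hWh hWh2
  set Z : Matrix (Fin n) (Fin n) ℂ :=
    (2 : ℂ)⁻¹ • (X + Y) + (hX.add hY).sqrt * Wh * (hX.add hY).sqrt with hZdef
  have hP1 : (A + X).PosSemidef := hA.add hX
  have hP2 : (B + Y).PosSemidef := hB.add hY
  have hS' : ((A + X) + (B + Y)).PosSemidef := hP1.add hP2
  have hS : (A + B).PosSemidef := hA.add hB
  have SFq := sumFacts hP1 hP2 hSd
  have SFab := sumFacts hA hB hABd
  have hSdH : Sdᴴ = Sd := SFq.hSdH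
  have hABdH : ABdᴴ = ABd := SFab.hSdH
  have hE1 : (A + X) * Sd * (B + Y) = (A + X) - (A + X) * Sd * (A + X) := SFq.prodAB
  have hE2 : A * ABd * B = A - A * ABd * A := SFab.prodAB
  have hEH : ((A + X) * Sd * (B + Y) - A * ABd * B).IsHermitian := by
    rw [hE1, hE2]
    have h1 : ((A + X) * Sd * (A + X)).IsHermitian := by
      unfold Matrix.IsHermitian
      simp [Matrix.conjTranspose_mul, hSdH, hP1.1.eq, Matrix.mul_assoc]
    have h2 : (A * ABd * A).IsHermitian := by
      unfold Matrix.IsHermitian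
      simp [Matrix.conjTranspose_mul, hABdH, hA.1.eq, Matrix.mul_assoc]
    exact (hP1.1.sub h1).sub (hA.1.sub h2)
  have qfE : ∀ v : Fin n → ℂ,
      star v ⬝ᵥ (((A + X) * Sd * (B + Y) - A * ABd * B) *ᵥ v)
        = star v ⬝ᵥ (((A + X) - (A + X) * Sd * (A + X)) *ᵥ v)
          - star v ⬝ᵥ ((A - A * ABd * A) *ᵥ v) := by
    intro v
    rw [hE1, hE2, Matrix.sub_mulVec, dotProduct_sub]
  -- E is positive semidefinite
  have hEpsd : ((A + X) * Sd * (B + Y) - A * ABd * B).PosSemidef := by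
    refine .of_dotProduct_mulVec_nonneg hEH fun v => ?_
    rw [qfE v, sub_nonneg]
    set y1 : Fin n → ℂ := (Sd * (A + X)) *ᵥ v with hy1
    have id1 := qf_identity hP1.1.eq hP2.1.eq hSdH SFq.absorbA v y1
    have id2 := qf_identity hA.1.eq hB.1.eq hABdH SFab.absorbA v y1
    rw [← hy1, sub_self] at id1
    simp only [Matrix.mulVec_zero, dotProduct_zero, zero_add] at id1
    calc star v ⬝ᵥ ((A - A * ABd * A) *ᵥ v)
        ≤ star (y1 - (ABd * A) *ᵥ v) ⬝ᵥ ((A + B) *ᵥ (y1 - (ABd * A) *ᵥ v))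
            + star v ⬝ᵥ ((A - A * ABd * A) *ᵥ v) :=
          le_add_of_nonneg_left (hS.dotProduct_mulVec_nonneg _)
    _ = star (v - y1) ⬝ᵥ (A *ᵥ (v - y1)) + star y1 ⬝ᵥ (B *ᵥ y1) := id2.symm
    _ ≤ star (v - y1) ⬝ᵥ ((A + X) *ᵥ (v - y1)) + star y1 ⬝ᵥ ((B + Y) *ᵥ y1) := by
        simp only [Matrix.add_mulVec, dotProduct_add]
        exact add_le_add (le_add_of_nonneg_right (hX.dotProduct_mulVec_nonneg _)) (le_add_of_nonneg_right (hY.dotProduct_mulVec_nonneg _))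
    _ = star v ⬝ᵥ (((A + X) - (A + X) * Sd * (A + X)) *ᵥ v) := id1
  -- pointwise upper bound
  have upper : ∀ v : Fin n → ℂ,
      (star v ⬝ᵥ (((A + X) * Sd * (B + Y) - A * ABd * B) *ᵥ v)).re
        ≤ (1 / 2) * (‖ABd * (A - B)‖ ^ 2 + 1) * ‖Z‖ * ‖ev v‖ ^ 2 := by
    intro v
    set u : Fin n → ℂ := (ABd * (A - B)) *ᵥ v with hu
    set y : Fin n → ℂ := (2 : ℂ)⁻¹ • (v + u) with hy
    have id1 := qf_identity hP1.1.eq hP2.1.eq hSdH SFq.absorbA v y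
    have id2 := qf_identity hA.1.eq hB.1.eq hABdH SFab.absorbA v y
    -- the vanishing S-term in id2
    have hSy : (A + B) *ᵥ (y - (ABd * A) *ᵥ v) = 0 := by
      have e1 : (A + B) *ᵥ u = (A - B) *ᵥ v := by
        rw [hu, Matrix.mulVec_mulVec, ← Matrix.mul_assoc]
        congr 1
        rw [Matrix.mul_sub]
        rw [show (A + B) * ABd * A = A from SFab.absorbA,
          show (A + B) * ABd * B = B from SFab.absorbB]
      have e2 : (A + B) *ᵥ ((ABd * A) *ᵥ v) = A *ᵥ v := by
        rw [Matrix.mulVec_mulVec, ← Matrix.mul_assoc, SFab.absorbA]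
      rw [Matrix.mulVec_sub, hy, Matrix.mulVec_smul, Matrix.mulVec_add, e1, e2]
      have e3 : (A + B) *ᵥ v + (A - B) *ᵥ v = (2 : ℂ) • (A *ᵥ v) := by
        rw [← Matrix.add_mulVec]
        have : (A + B) + (A - B) = (2 : ℂ) • A := by module
        rw [this, Matrix.smul_mulVec]
      rw [e3, smul_smul]
      norm_num
    have s0 : star (y - (ABd * A) *ᵥ v) ⬝ᵥ ((A + B) *ᵥ (y - (ABd * A) *ᵥ v)) = 0 := by
      rw [hSy, dotProduct_zero]
    have id2' : star v ⬝ᵥ ((A - A * ABd * A) *ᵥ v)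
        = star (v - y) ⬝ᵥ (A *ᵥ (v - y)) + star y ⬝ᵥ (B *ᵥ y) := by
      linear_combination -id2 - s0
    -- complex-order estimate
    have step2 : star (v - y) ⬝ᵥ (X *ᵥ (v - y)) ≤ star (v - y) ⬝ᵥ (Z *ᵥ (v - y)) := by
      have h := hZX.dotProduct_mulVec_nonneg (v - y)
      rw [Matrix.sub_mulVec, dotProduct_sub, sub_nonneg] at h
      exact h
    have step3 : star y ⬝ᵥ (Y *ᵥ y) ≤ star y ⬝ᵥ (Z *ᵥ y) := by
      have h := hZY.dotProduct_mulVec_nonneg y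
      rw [Matrix.sub_mulVec, dotProduct_sub, sub_nonneg] at h
      exact h
    have cle : star v ⬝ᵥ (((A + X) * Sd * (B + Y) - A * ABd * B) *ᵥ v)
        ≤ star (v - y) ⬝ᵥ (Z *ᵥ (v - y)) + star y ⬝ᵥ (Z *ᵥ y) := by
      have step1 : star v ⬝ᵥ (((A + X) - (A + X) * Sd * (A + X)) *ᵥ v)
          ≤ star (v - y) ⬝ᵥ ((A + X) *ᵥ (v - y)) + star y ⬝ᵥ ((B + Y) *ᵥ y) := by
        have e : star v ⬝ᵥ (((A + X) - (A + X) * Sd * (A + X)) *ᵥ v)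
            = (star (v - y) ⬝ᵥ ((A + X) *ᵥ (v - y)) + star y ⬝ᵥ ((B + Y) *ᵥ y))
              - star (y - (Sd * (A + X)) *ᵥ v) ⬝ᵥ
                  ((A + X + (B + Y)) *ᵥ (y - (Sd * (A + X)) *ᵥ v)) :=
          eq_sub_of_add_eq' id1.symm
        rw [e]
        exact sub_le_self _ (hS'.dotProduct_mulVec_nonneg _)
      have expand : star (v - y) ⬝ᵥ ((A + X) *ᵥ (v - y)) + star y ⬝ᵥ ((B + Y) *ᵥ y)
          = (star (v - y) ⬝ᵥ (A *ᵥ (v - y)) + star y ⬝ᵥ (B *ᵥ y))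
            + (star (v - y) ⬝ᵥ (X *ᵥ (v - y)) + star y ⬝ᵥ (Y *ᵥ y)) := by
        simp only [Matrix.add_mulVec, dotProduct_add]
        ring
      rw [qfE v, id2']
      calc star v ⬝ᵥ ((A + X - (A + X) * Sd * (A + X)) *ᵥ v)
            - (star (v - y) ⬝ᵥ (A *ᵥ (v - y)) + star y ⬝ᵥ (B *ᵥ y))
          ≤ ((star (v - y) ⬝ᵥ (A *ᵥ (v - y)) + star y ⬝ᵥ (B *ᵥ y))
              + (star (v - y) ⬝ᵥ (X *ᵥ (v - y)) + star y ⬝ᵥ (Y *ᵥ y)))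
            - (star (v - y) ⬝ᵥ (A *ᵥ (v - y)) + star y ⬝ᵥ (B *ᵥ y)) := by
            apply sub_le_sub_right
            rw [← expand]
            exact step1
      _ = star (v - y) ⬝ᵥ (X *ᵥ (v - y)) + star y ⬝ᵥ (Y *ᵥ y) := by ring
      _ ≤ star (v - y) ⬝ᵥ (Z *ᵥ (v - y)) + star y ⬝ᵥ (Z *ᵥ y) := add_le_add step2 step3
    -- pass to real parts and norms
    have hre : (star v ⬝ᵥ (((A + X) * Sd * (B + Y) - A * ABd * B) *ᵥ v)).re
        ≤ (star (v - y) ⬝ᵥ (Z *ᵥ (v - y))).re + (star y ⬝ᵥ (Z *ᵥ y)).re := by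
      have := (Complex.le_def.mp cle).1
      rwa [Complex.add_re] at this
    have hb1 : (star (v - y) ⬝ᵥ (Z *ᵥ (v - y))).re ≤ ‖Z‖ * ‖ev (v - y)‖ ^ 2 :=
      qf_re_le_norm Z (v - y)
    have hb2 : (star y ⬝ᵥ (Z *ᵥ y)).re ≤ ‖Z‖ * ‖ev y‖ ^ 2 := qf_re_le_norm Z y
    -- vector norm identities
    have hvy : v - y = (2 : ℂ)⁻¹ • (v - u) := by rw [hy]; module
    have hev_smul : ∀ (w : Fin n → ℂ), ‖ev ((2 : ℂ)⁻¹ • w)‖ = 2⁻¹ * ‖ev w‖ := by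
      intro w
      have : ev ((2 : ℂ)⁻¹ • w) = (2 : ℂ)⁻¹ • ev w := rfl
      rw [this, norm_smul]
      norm_num
    have hev_sub : ev (v - u) = ev v - ev u := rfl
    have hev_add : ev (v + u) = ev v + ev u := rfl
    have par : ‖ev v + ev u‖ * ‖ev v + ev u‖ + ‖ev v - ev u‖ * ‖ev v - ev u‖
        = 2 * (‖ev v‖ * ‖ev v‖ + ‖ev u‖ * ‖ev u‖) :=
      parallelogram_law_with_norm_mul ℂ (ev v) (ev u)
    have hnu : ‖ev u‖ ≤ ‖ABd * (A - B)‖ * ‖ev v‖ := by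
      have h := Matrix.l2_opNorm_mulVec (ABd * (A - B)) (ev v)
      exact h
    have hny : ‖ev y‖ = 2⁻¹ * ‖ev (v + u)‖ := by rw [hy]; exact hev_smul _
    have hnvy : ‖ev (v - y)‖ = 2⁻¹ * ‖ev (v - u)‖ := by rw [hvy]; exact hev_smul _
    have hZnn : (0 : ℝ) ≤ ‖Z‖ := norm_nonneg _
    have husq : ‖ev u‖ ^ 2 ≤ (‖ABd * (A - B)‖ * ‖ev v‖) ^ 2 := by
      have := pow_le_pow_left₀ (norm_nonneg (ev u)) hnu 2
      exact this
    calc (star v ⬝ᵥ (((A + X) * Sd * (B + Y) - A * ABd * B) *ᵥ v)).re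
        ≤ (star (v - y) ⬝ᵥ (Z *ᵥ (v - y))).re + (star y ⬝ᵥ (Z *ᵥ y)).re := hre
    _ ≤ ‖Z‖ * ‖ev (v - y)‖ ^ 2 + ‖Z‖ * ‖ev y‖ ^ 2 := add_le_add hb1 hb2
    _ = ‖Z‖ * 2⁻¹ * 2⁻¹ * (‖ev (v - u)‖ * ‖ev (v - u)‖ + ‖ev (v + u)‖ * ‖ev (v + u)‖) := by
        rw [hny, hnvy]; ring
    _ = ‖Z‖ * 2⁻¹ * (‖ev v‖ * ‖ev v‖ + ‖ev u‖ * ‖ev u‖) := by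
        rw [← hev_sub, ← hev_add] at par
        rw [add_comm (‖ev (v - u)‖ * ‖ev (v - u)‖), par]; ring
    _ ≤ (1 / 2) * (‖ABd * (A - B)‖ ^ 2 + 1) * ‖Z‖ * ‖ev v‖ ^ 2 := by
        nlinarith [husq, hZnn, norm_nonneg (ev v), norm_nonneg (ev u),
          mul_le_mul_of_nonneg_left husq hZnn]
  exact norm_le_of_qf hEpsd (by positivity) upper
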